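/- Let (G,D,⋆) be a probabilistic metric space with ⋆ continuous, and (a_n) ⊆ G a Cauchy sequence. Then there exists a probabilistic 1-Lipschitz map f : G → Δ⁺ such that D(a_n,x) → f(x) weakly for every x ∈ G, and in particular f(a_n) → H_0 weakly. -/

import Mathlib

open Filter Topology Set

/-- A (real-domain representation of a) distribution function in Δ⁺ :
nondecreasing, with values in [0,1], left-continuous, vanishing on (-∞,0]. -/
def MemDP (f : ℝ → ℝ) : Prop :=
  Monotone f ∧ (∀ t, 0 ≤ f t) ∧ (∀ t, f t ≤ 1) ∧
  (∀ t : ℝ, Tendsto f (nhdsWithin t (Set.Iio t)) (nhds (f t))) ∧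
  (∀ t ≤ (0:ℝ), f t = 0)

/-- The distribution H₀. -/
noncomputable def H0 : ℝ → ℝ := fun t => if 0 < t then 1 else 0

/-- The distribution H_∞ (zero at every finite point). -/
def Hinf : ℝ → ℝ := fun _ => 0

/-- Pointwise order on distribution functions. -/
def dpLE (f g : ℝ → ℝ) : Prop := ∀ t, f t ≤ g t

/-- Triangle function on Δ⁺. -/
structure IsTriangle (star : (ℝ → ℝ) → (ℝ → ℝ) → (ℝ → ℝ)) : Prop where
  mem : ∀ f g, MemDP f → MemDP g → MemDP (star f g)
  comm : ∀ f g, MemDP f → MemDP g → star f g = star g f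
  assoc : ∀ f g h, MemDP f → MemDP g → MemDP h →
    star f (star g h) = star (star f g) h
  ident : ∀ f, MemDP f → star f H0 = f
  mono : ∀ f g h, MemDP f → MemDP g → MemDP h → dpLE f g → dpLE (star f h) (star g h)

/-- Sup-continuity of a triangle function (suprema in Δ⁺ are pointwise). -/
def SupCont (star : (ℝ → ℝ) → (ℝ → ℝ) → (ℝ → ℝ)) : Prop :=
  ∀ (I : Type) (_ : Nonempty I) (F : I → ℝ → ℝ) (L : ℝ → ℝ),
    (∀ i, MemDP (F i)) → MemDP L →
    ∀ t, (⨆ i, star (F i) L t) = star (fun s => ⨆ i, F i s) L t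

/-- Weak convergence in Δ⁺: pointwise convergence at each continuity point of the limit. -/
def WConv (Fn : ℕ → ℝ → ℝ) (F : ℝ → ℝ) : Prop :=
  ∀ t, ContinuousAt F t → Tendsto (fun n => Fn n t) atTop (nhds (F t))

/-- Continuity of a triangle function w.r.t. weak convergence. -/
def StarCont (star : (ℝ → ℝ) → (ℝ → ℝ) → (ℝ → ℝ)) : Prop :=
  ∀ (Fn Ln : ℕ → ℝ → ℝ) (F L : ℝ → ℝ),
    (∀ n, MemDP (Fn n)) → (∀ n, MemDP (Ln n)) → MemDP F → MemDP L →
    WConv Fn F → WConv Ln L → WConv (fun n => star (Fn n) (Ln n)) (star F L)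

/-- Probabilistic metric space (G, D, ⋆). -/
structure IsPMS {G : Type} (D : G → G → ℝ → ℝ)
    (star : (ℝ → ℝ) → (ℝ → ℝ) → (ℝ → ℝ)) : Prop where
  tri : IsTriangle star
  mem : ∀ p q, MemDP (D p q)
  eq_iff : ∀ p q, D p q = H0 ↔ p = q
  symm : ∀ p q, D p q = D q p
  triangle_ineq : ∀ p q r, dpLE (star (D p q) (D q r)) (D p r)

/-- Probabilistic invariant metric group. -/
structure IsPIMG {G : Type} [Group G] (D : G → G → ℝ → ℝ)
    (star : (ℝ → ℝ) → (ℝ → ℝ) → (ℝ → ℝ)) extends IsPMS D star : Prop where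
  invL : ∀ p q r : G, D (r * p) (r * q) = D p q
  invR : ∀ p q r : G, D (p * r) (q * r) = D p q

/-- Probabilistic 1-Lipschitz map. -/
def Lip1 {G : Type} (D : G → G → ℝ → ℝ) (star : (ℝ → ℝ) → (ℝ → ℝ) → (ℝ → ℝ))
    (f : G → ℝ → ℝ) : Prop :=
  (∀ x, MemDP (f x)) ∧ ∀ x y, dpLE (star (D x y) (f y)) (f x)

/-- δ_a(y) = D(y,a). -/
def dlt {G : Type} (D : G → G → ℝ → ℝ) (a : G) : G → ℝ → ℝ := fun y => D y a

/-- Sup-convolution (f ⊙ g)(x) = sup_{yz = x} f(y) ⋆ g(z), pointwise. -/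
noncomputable def sconv {G : Type} [Group G] (star : (ℝ → ℝ) → (ℝ → ℝ) → (ℝ → ℝ))
    (f g : G → ℝ → ℝ) : G → ℝ → ℝ :=
  fun x t => ⨆ y : G, star (f (x * y⁻¹)) (g y) t

/-- Cauchy sequence for a probabilistic metric: D(a_n, a_p) → H₀ weakly. -/
def PCauchy {G : Type} (D : G → G → ℝ → ℝ) (a : ℕ → G) : Prop :=
  ∀ t > (0:ℝ), ∀ ε > (0:ℝ), ∃ N, ∀ n ≥ N, ∀ p ≥ N, 1 - ε ≤ D (a n) (a p) t

/-- Π(G): probabilistic 1-Lipschitz maps that are pointwise weak limits of δ_{a_n}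
for some Cauchy sequence (a_n). -/
def InPi {G : Type} (D : G → G → ℝ → ℝ) (star : (ℝ → ℝ) → (ℝ → ℝ) → (ℝ → ℝ))
    (f : G → ℝ → ℝ) : Prop :=
  Lip1 D star f ∧ ∃ a : ℕ → G, PCauchy D a ∧ ∀ x, WConv (fun n => D (a n) x) (f x)

/-- 𝔻(f,g) = sup_{x∈G} f(x) ⋆ g(x), pointwise. -/
noncomputable def DD {G : Type} (star : (ℝ → ℝ) → (ℝ → ℝ) → (ℝ → ℝ))
    (f g : G → ℝ → ℝ) : ℝ → ℝ :=
  fun t => ⨆ x : G, star (f x) (g x) t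

/-- t-norm on [0,1]. -/
structure IsTnorm (T : ℝ → ℝ → ℝ) : Prop where
  mem : ∀ x ∈ Set.Icc (0:ℝ) 1, ∀ y ∈ Set.Icc (0:ℝ) 1, T x y ∈ Set.Icc (0:ℝ) 1
  comm : ∀ x y, T x y = T y x
  assoc : ∀ x y z, T x (T y z) = T (T x y) z
  mono : ∀ x y z, y ≤ z → T x y ≤ T x z
  one : ∀ x ∈ Set.Icc (0:ℝ) 1, T x 1 = x

/-- Left-continuity of a t-norm (in each variable; by commutativity one suffices). -/
def LeftCtsTnorm (T : ℝ → ℝ → ℝ) : Prop :=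
  ∀ y x : ℝ, Tendsto (fun s => T s y) (nhdsWithin x (Set.Iio x)) (nhds (T x y))

/-- The triangle function ⋆_T : (F ⋆_T L)(t) = sup_{s+u=t} T(F(s), L(u)). -/
noncomputable def starT (T : ℝ → ℝ → ℝ) (f g : ℝ → ℝ) : ℝ → ℝ :=
  fun t => ⨆ s : ℝ, T (f s) (g (t - s))

/-!
Put `L x t = liminf_n D(a_n, x)(t)` and let `f x` be the left-continuous regularization of
`L x`. By Helly's selection theorem every subsequence of `D(a_n, x)` has a weakly convergent
subsequence `D(a_{n_j}, x) → M`; since `D(a_j, a_{n_j}) → H0`, continuity of `⋆` and the triangle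
inequality `D(a_j, a_{n_j}) ⋆ D(a_{n_j}, x) ≤ D(a_j, x)` give `M ≤ L x` at continuity points of
`M`. Hence `limsup_n D(a_n, x)(s) ≤ L x t` for `s < t`, which forces `D(a_n, x) → f x` weakly.
The Lipschitz bound is the triangle inequality `D(a_n, y) ⋆ D(y, x) ≤ D(a_n, x)` in the limit,
and `f(a_n) → H0` is the Cauchy property.
-/

namespace MemDP

variable {f : ℝ → ℝ}

lemma monotone (hf : MemDP f) : Monotone f := hf.1

lemma nonneg (hf : MemDP f) (t : ℝ) : 0 ≤ f t := hf.2.1 t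

lemma le_one (hf : MemDP f) (t : ℝ) : f t ≤ 1 := hf.2.2.1 t

lemma tendsto_nhdsLT (hf : MemDP f) (t : ℝ) : Tendsto f (𝓝[<] t) (𝓝 (f t)) := hf.2.2.2.1 t

lemma eq_zero_of_nonpos (hf : MemDP f) {t : ℝ} (ht : t ≤ 0) : f t = 0 := hf.2.2.2.2 t ht

lemma isBoundedUnder_le {F : ℕ → ℝ → ℝ} (hF : ∀ n, MemDP (F n)) (t : ℝ) :
    IsBoundedUnder (· ≤ ·) atTop (fun n => F n t) :=
  isBoundedUnder_of ⟨1, fun n => (hF n).le_one t⟩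

lemma isBoundedUnder_ge {F : ℕ → ℝ → ℝ} (hF : ∀ n, MemDP (F n)) (t : ℝ) :
    IsBoundedUnder (· ≥ ·) atTop (fun n => F n t) :=
  isBoundedUnder_of ⟨0, fun n => (hF n).nonneg t⟩

end MemDP

lemma memDP_H0 : MemDP H0 := by
  have H0_monotone : Monotone H0 := fun s t hst => by
    unfold H0; split_ifs with hs ht
    exacts [le_rfl, absurd (hs.trans_le hst) ht, zero_le_one, le_rfl]
  refine ⟨H0_monotone, fun t => ?_, fun t => ?_, fun t => ?_, fun t ht => if_neg ht.not_gt⟩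
  · unfold H0; split_ifs <;> norm_num
  · unfold H0; split_ifs <;> norm_num
  · rcases le_or_gt t 0 with ht | ht
    · refine tendsto_const_nhds.congr' ?_
      filter_upwards [self_mem_nhdsWithin] with s (hs : s < t)
      simp [H0, ht.not_gt, (hs.trans_le ht).not_gt]
    · refine tendsto_const_nhds.congr' ?_
      filter_upwards [Ioo_mem_nhdsLT ht] with s hs
      simp [H0, hs.1, ht]

lemma Monotone.exists_continuousAt_mem_Ioo {M : ℝ → ℝ} (hM : Monotone M) {s t : ℝ}
    (hst : s < t) : ∃ τ ∈ Ioo s t, ContinuousAt M τ := by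
  obtain ⟨τ, hτ, hτst⟩ := (hM.countable_not_continuousAt.dense_compl ℝ).exists_between hst
  exact ⟨τ, hτst, not_not.mp hτ⟩

lemma Monotone.le_of_forall_continuousAt {M : ℝ → ℝ} (hM : Monotone M) {t c : ℝ}
    (hlc : Tendsto M (𝓝[<] t) (𝓝 (M t))) (h : ∀ s < t, ContinuousAt M s → M s ≤ c) :
    M t ≤ c := by
  refine _root_.le_of_tendsto hlc ?_
  filter_upwards [self_mem_nhdsWithin] with s (hs : s < t)
  obtain ⟨τ, hτ, hτc⟩ := hM.exists_continuousAt_mem_Ioo hs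
  exact (hM hτ.1.le).trans (h τ hτ.2 hτc)

noncomputable def seqLiminf (F : ℕ → ℝ → ℝ) : ℝ → ℝ := fun t => liminf (fun n => F n t) atTop

section seqLiminf

variable {F : ℕ → ℝ → ℝ}

lemma monotone_seqLiminf (hF : ∀ n, MemDP (F n)) : Monotone (seqLiminf F) := fun _ _ hst =>
  liminf_le_liminf (.of_forall fun n => (hF n).monotone hst) (MemDP.isBoundedUnder_ge hF _)
    (MemDP.isBoundedUnder_le hF _).isCoboundedUnder_ge

lemma memDP_leftLim_seqLiminf (hF : ∀ n, MemDP (F n)) :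
    MemDP (Function.leftLim (seqLiminf F)) := by
  have hmono := monotone_seqLiminf hF
  have hnonneg (t : ℝ) : 0 ≤ seqLiminf F t :=
    le_liminf_of_le (MemDP.isBoundedUnder_le hF t).isCoboundedUnder_ge
      (.of_forall fun n => (hF n).nonneg t)
  have hle_one (t : ℝ) : seqLiminf F t ≤ 1 :=
    liminf_le_of_le (MemDP.isBoundedUnder_ge hF t) fun b hb =>
      let ⟨n, hn⟩ := hb.exists; hn.trans ((hF n).le_one t)
  have hleftLim_nonneg (t : ℝ) : 0 ≤ Function.leftLim (seqLiminf F) t :=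
    (hnonneg (t - 1)).trans (hmono.le_leftLim (sub_one_lt t))
  refine ⟨hmono.leftLim, hleftLim_nonneg, fun t => (hmono.leftLim_le le_rfl).trans (hle_one t),
    fun t => ?_, fun t ht => le_antisymm ((hmono.leftLim_le le_rfl).trans_eq ?_) (hleftLim_nonneg t)⟩
  · exact ((continuousWithinAt_leftLim_Iic (hmono.tendsto_leftLim t)).mono
      Iio_subset_Iic_self).tendsto
  · simp only [seqLiminf, fun n => (hF n).eq_zero_of_nonpos ht]
    exact liminf_const 0

end seqLiminf

lemma wconv_leftLim_seqLiminf {F : ℕ → ℝ → ℝ} (hF : ∀ n, MemDP (F n))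
    (h : ∀ s t, s < t → limsup (fun n => F n s) atTop ≤ seqLiminf F t) :
    WConv F (Function.leftLim (seqLiminf F)) := by
  have hmono := monotone_seqLiminf hF
  intro t hcont
  refine tendsto_of_le_liminf_of_limsup_le (hmono.leftLim_le le_rfl) ?_
    (MemDP.isBoundedUnder_le hF t) (MemDP.isBoundedUnder_ge hF t)
  refine ge_of_tendsto (hcont.continuousWithinAt (s := Ioi t)).tendsto ?_
  filter_upwards [self_mem_nhdsWithin] with u (hu : t < u)
  exact (h t ((t + u) / 2) (by linarith)).trans (hmono.le_leftLim (by linarith))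

/-- Helly's selection theorem. -/
lemma exists_strictMono_wconv {F : ℕ → ℝ → ℝ} (hF : ∀ n, MemDP (F n)) :
    ∃ φ : ℕ → ℕ, StrictMono φ ∧ ∃ M, MemDP M ∧ WConv (fun k => F (φ k)) M := by
  obtain ⟨g, -, φ, hφ, hconv⟩ := (isCompact_univ_pi fun _ : ℚ => isCompact_Icc (a := (0 : ℝ))
    (b := 1)).tendsto_subseq (x := fun n (q : ℚ) => F n q)
    fun n => mem_univ_pi.2 fun q => ⟨(hF n).nonneg q, (hF n).le_one q⟩
  have hFφ (k : ℕ) : MemDP (F (φ k)) := hF (φ k)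
  refine ⟨φ, hφ, _, memDP_leftLim_seqLiminf hFφ, wconv_leftLim_seqLiminf hFφ fun s t hst => ?_⟩
  obtain ⟨q, hsq, hqt⟩ := exists_rat_btwn hst
  have hq : Tendsto (fun k => F (φ k) q) atTop (𝓝 (g q)) := tendsto_pi_nhds.1 hconv q
  calc limsup (fun k => F (φ k) s) atTop
      ≤ limsup (fun k => F (φ k) q) atTop :=
        limsup_le_limsup (.of_forall fun k => (hFφ k).monotone hsq.le)
          (MemDP.isBoundedUnder_ge hFφ s).isCoboundedUnder_le (MemDP.isBoundedUnder_le hFφ q)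
    _ = liminf (fun k => F (φ k) q) atTop := hq.limsup_eq.trans hq.liminf_eq.symm
    _ ≤ seqLiminf (fun k => F (φ k)) t :=
        liminf_le_liminf (.of_forall fun k => (hFφ k).monotone hqt.le)
          (MemDP.isBoundedUnder_ge hFφ q) (MemDP.isBoundedUnder_le hFφ t).isCoboundedUnder_ge

lemma wconv_H0 {F : ℕ → ℝ → ℝ} (hF : ∀ n, MemDP (F n))
    (h : ∀ t > 0, ∀ ε > 0, ∀ᶠ n in atTop, 1 - ε ≤ F n t) : WConv F H0 := by
  intro t _
  rcases le_or_gt t 0 with ht | ht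
  · simp only [H0, if_neg ht.not_gt, fun n => (hF n).eq_zero_of_nonpos ht]
    exact tendsto_const_nhds
  · rw [show H0 t = 1 from if_pos ht]
    refine tendsto_order.2 ⟨fun b hb => ?_, fun b hb => .of_forall fun n => ?_⟩
    · filter_upwards [h t ht ((1 - b) / 2) (by linarith)] with n hn
      linarith
    · exact ((hF n).le_one t).trans_lt hb

lemma le_liminf_of_tendsto_of_le {u v : ℕ → ℝ} {m : ℝ} (hv : Tendsto v atTop (𝓝 m))
    (hvu : ∀ n, v n ≤ u n) (hu : ∀ n, u n ≤ 1) : m ≤ liminf u atTop := by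
  rw [← hv.liminf_eq]
  exact liminf_le_liminf (.of_forall hvu) hv.isBoundedUnder_ge
    (isBoundedUnder_of ⟨1, hu⟩).isCoboundedUnder_ge

/-- The lower limit need not be left-continuous, hence the regularization. -/
noncomputable def limitMap {G : Type} (D : G → G → ℝ → ℝ) (a : ℕ → G) (x : G) : ℝ → ℝ :=
  Function.leftLim (seqLiminf fun n => D (a n) x)

section PMS

variable {G : Type} {D : G → G → ℝ → ℝ} {star : (ℝ → ℝ) → (ℝ → ℝ) → (ℝ → ℝ)}
  {a : ℕ → G}

lemma PCauchy.wconv_H0 (hD : ∀ p q, MemDP (D p q)) (ha : PCauchy D a) {p q : ℕ → ℕ}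
    (hp : Tendsto p atTop atTop) (hq : Tendsto q atTop atTop) :
    WConv (fun j => D (a (p j)) (a (q j))) H0 := by
  refine _root_.wconv_H0 (fun j => hD _ _) fun t ht ε hε => ?_
  obtain ⟨N, hN⟩ := ha t ht ε hε
  filter_upwards [hp.eventually_ge_atTop N, hq.eventually_ge_atTop N] with j hpj hqj
  exact hN _ hpj _ hqj

lemma memDP_limitMap (h : IsPMS D star) (x : G) : MemDP (limitMap D a x) :=
  memDP_leftLim_seqLiminf fun n => h.mem (a n) x

lemma IsPMS.le_seqLiminf_of_wconv (h : IsPMS D star) (hc : StarCont star) (ha : PCauchy D a)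
    {x : G} {φ : ℕ → ℕ} (hφ : StrictMono φ) {M : ℝ → ℝ} (hM : MemDP M)
    (hW : WConv (fun j => D (a (φ j)) x) M) {τ : ℝ} (hτ : ContinuousAt M τ) :
    M τ ≤ seqLiminf (fun n => D (a n) x) τ := by
  have hclose := ha.wconv_H0 h.mem tendsto_id hφ.tendsto_atTop
  have hstar := hc _ _ _ _ (fun j => h.mem _ _) (fun j => h.mem _ _) memDP_H0 hM hclose hW
  rw [h.tri.comm H0 M memDP_H0 hM, h.tri.ident M hM] at hstar
  exact le_liminf_of_tendsto_of_le (hstar τ hτ)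
    (fun j => h.triangle_ineq (a j) (a (φ j)) x τ) fun n => (h.mem (a n) x).le_one τ

lemma IsPMS.limsup_le_seqLiminf (h : IsPMS D star) (hc : StarCont star) (ha : PCauchy D a)
    (x : G) {s t : ℝ} (hst : s < t) :
    limsup (fun n => D (a n) x s) atTop ≤ seqLiminf (fun n => D (a n) x) t := by
  refine le_of_forall_lt_imp_le_of_dense fun c hc' => ?_
  obtain ⟨m, hm, hcm⟩ := extraction_of_frequently_atTop <| frequently_lt_of_lt_limsup
    (MemDP.isBoundedUnder_ge (fun n => h.mem (a n) x) s).isCoboundedUnder_le hc'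
  obtain ⟨ψ, hψ, M, hM, hW⟩ := exists_strictMono_wconv fun j => h.mem (a (m j)) x
  obtain ⟨τ, hτ, hτc⟩ := hM.monotone.exists_continuousAt_mem_Ioo hst
  have hcM : c ≤ M τ := ge_of_tendsto (hW τ hτc) <| .of_forall fun k =>
    (hcm (ψ k)).le.trans ((h.mem _ x).monotone hτ.1.le)
  calc c ≤ M τ := hcM
    _ ≤ seqLiminf (fun n => D (a n) x) τ :=
      h.le_seqLiminf_of_wconv hc ha (hm.comp hψ) hM hW hτc
    _ ≤ seqLiminf (fun n => D (a n) x) t :=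
      monotone_seqLiminf (fun n => h.mem (a n) x) hτ.2.le

lemma IsPMS.wconv_limitMap (h : IsPMS D star) (hc : StarCont star) (ha : PCauchy D a)
    (x : G) : WConv (fun n => D (a n) x) (limitMap D a x) :=
  wconv_leftLim_seqLiminf (fun n => h.mem (a n) x) fun _ _ => h.limsup_le_seqLiminf hc ha x

lemma IsPMS.lip1_limitMap (h : IsPMS D star) (hc : StarCont star) (ha : PCauchy D a) :
    Lip1 D star (limitMap D a) := by
  refine ⟨memDP_limitMap h, fun x y t => ?_⟩
  have hfy := memDP_limitMap (a := a) h y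
  have hstar := h.tri.mem _ _ hfy (h.mem y x)
  have hW := hc _ _ _ _ (fun n => h.mem (a n) y) (fun _ => h.mem y x) hfy (h.mem y x)
    (h.wconv_limitMap hc ha y) fun _ _ => tendsto_const_nhds
  rw [h.symm x y, h.tri.comm _ _ (h.mem y x) hfy]
  refine hstar.monotone.le_of_forall_continuousAt (hstar.tendsto_nhdsLT t) fun s hst hs => ?_
  calc star (limitMap D a y) (D y x) s ≤ seqLiminf (fun n => D (a n) x) s :=
        le_liminf_of_tendsto_of_le (hW s hs) (fun n => h.triangle_ineq (a n) y x s)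
          fun n => (h.mem (a n) x).le_one s
    _ ≤ limitMap D a x t := (monotone_seqLiminf fun n => h.mem (a n) x).le_leftLim hst

lemma IsPMS.wconv_limitMap_H0 (h : IsPMS D star) (ha : PCauchy D a) :
    WConv (fun n => limitMap D a (a n)) H0 := by
  refine wconv_H0 (fun n => memDP_limitMap h (a n)) fun t ht ε hε => ?_
  obtain ⟨N, hN⟩ := ha (t / 2) (by linarith) ε hε
  filter_upwards [eventually_ge_atTop N] with n hn
  calc 1 - ε ≤ seqLiminf (fun p => D (a p) (a n)) (t / 2) :=
        le_liminf_of_le (MemDP.isBoundedUnder_le (fun p => h.mem (a p) (a n)) _).isCoboundedUnder_ge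
          ((eventually_ge_atTop N).mono fun p hp => hN p hp n hn)
    _ ≤ limitMap D a (a n) t :=
        (monotone_seqLiminf fun p => h.mem (a p) (a n)).le_leftLim (by linarith)

end PMS

/-- every Cauchy sequence (a_n) gives rise to a probabilistic
1-Lipschitz map f with D(a_n,·) → f pointwise weakly and f(a_n) → H₀ weakly. -/
theorem stmt12 {G : Type} (D : G → G → ℝ → ℝ)
    (star : (ℝ → ℝ) → (ℝ → ℝ) → (ℝ → ℝ)) (h : IsPMS D star)
    (hc : StarCont star) (a : ℕ → G) (ha : PCauchy D a) :
    ∃ f : G → ℝ → ℝ, Lip1 D star f ∧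
      (∀ x, WConv (fun n => D (a n) x) (f x)) ∧
      WConv (fun n => f (a n)) H0 :=
  ⟨limitMap D a, h.lip1_limitMap hc ha, h.wconv_limitMap hc ha, h.wconv_limitMap_H0 ha⟩
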